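/- For any s > 0, integer k ≥ 0, and δ ∈ (0,1), if n is an integer with n ≥ 2(k² + s²)/δ (and n large enough that s/n < 1 and sk/n ≤ 1/2), then |P_s(k) - Pr[X_n = k]| ≤ δ/2, where X_n is binomial with parameters n and s/n. -/

import Mathlib

/-- The Poisson probability mass function with parameter `s`. -/
noncomputable def poissonPMF (s : ℝ) (k : ℕ) : ℝ := Real.exp (-s) * s ^ k / (Nat.factorial k)

/-- The binomial probability mass function: probability that a binomial random
variable with parameters `n` and `p` equals `k`. -/
noncomputable def binomPMF (n : ℕ) (p : ℝ) (k : ℕ) : ℝ :=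
  (n.choose k) * p ^ k * (1 - p) ^ (n - k)

/-!
With `p = s / n` the binomial mass factors as
`s ^ k / k ! * (∏ i < k, (1 - i / n)) * (1 - p) ^ (n - k)` and the Poisson mass as
`s ^ k / k ! * exp (-s)`. The product lies in `[1 - k ^ 2 / (2 n), 1]` by the Weierstrass product
inequality, and `(1 - p) ^ (n - k)` lies between `exp (-s) * (1 - s ^ 2 / n)` and
`exp (-s) * exp (s k / n)` because `exp (-p) * (1 - p ^ 2) ≤ 1 - p ≤ exp (-p)`. As the Poisson
mass is at most `1`, the two one-sided errors are at most `k ^ 2 / (2 n) + s ^ 2 / n` and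
`2 s k / n`, both bounded by `(k ^ 2 + s ^ 2) / n`.
-/

open Finset Real Nat

theorem Finset.one_sub_sum_le_prod_one_sub {ι R : Type*} [CommRing R] [LinearOrder R]
    [IsStrictOrderedRing R] (s : Finset ι) {f : ι → R} (h0 : ∀ i ∈ s, 0 ≤ f i)
    (h1 : ∀ i ∈ s, f i ≤ 1) : 1 - ∑ i ∈ s, f i ≤ ∏ i ∈ s, (1 - f i) := by
  classical
  induction s using Finset.induction_on with
  | empty => simp
  | insert a s ha ih =>
    rw [sum_insert ha, prod_insert ha]
    have ih := ih (fun i hi => h0 i (mem_insert_of_mem hi))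
      (fun i hi => h1 i (mem_insert_of_mem hi))
    have hsum : 0 ≤ ∑ i ∈ s, f i := sum_nonneg fun i hi => h0 i (mem_insert_of_mem hi)
    have ha0 := h0 a (mem_insert_self a s)
    have ha1 := h1 a (mem_insert_self a s)
    nlinarith [mul_le_mul_of_nonneg_left ih (sub_nonneg.2 ha1)]

theorem Finset.sum_range_natCast_le (k : ℕ) : ∑ i ∈ range k, (i : ℝ) ≤ (k : ℝ) ^ 2 / 2 := by
  have h : (∑ i ∈ range k, i) * 2 ≤ k ^ 2 := by
    rw [sum_range_id_mul_two, sq]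
    exact Nat.mul_le_mul_left k (Nat.sub_le k 1)
  have h' := (Nat.cast_le (α := ℝ)).2 h
  push_cast at h'
  linarith

theorem Nat.cast_choose_mul_div_pow {K : Type*} [Field K] [CharZero K] {n : ℕ} (hn : n ≠ 0)
    (k : ℕ) (x : K) :
    (n.choose k : K) * (x / n) ^ k = x ^ k / k ! * ∏ i ∈ range k, (1 - (i : K) / n) := by
  have hn' : (n : K) ≠ 0 := Nat.cast_ne_zero.2 hn
  have hprod : ∏ i ∈ range k, (1 - (i : K) / n) = (∏ i ∈ range k, ((n : K) - i)) / n ^ k := by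
    calc ∏ i ∈ range k, (1 - (i : K) / n) = ∏ i ∈ range k, (((n : K) - i) / n) :=
          prod_congr rfl fun i _ => by field_simp
      _ = (∏ i ∈ range k, ((n : K) - i)) / ∏ _i ∈ range k, (n : K) := prod_div_distrib _ _
      _ = (∏ i ∈ range k, ((n : K) - i)) / n ^ k := by rw [prod_const, card_range]
  rw [cast_choose_eq_descPochhammer_div, descPochhammer_eval_eq_prod_range, hprod, div_pow]
  field_simp

section ProdRange

variable {k n : ℕ}

theorem div_mem_Icc_of_mem_range (hk : k ≤ n) {i : ℕ} (hi : i ∈ range k) :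
    (i : ℝ) / n ∈ Set.Icc (0 : ℝ) 1 :=
  ⟨by positivity, div_le_one_of_le₀ (by exact_mod_cast (mem_range.1 hi).le.trans hk) n.cast_nonneg⟩

theorem prod_range_one_sub_div_nonneg (hk : k ≤ n) :
    0 ≤ ∏ i ∈ range k, (1 - (i : ℝ) / n) :=
  prod_nonneg fun _ hi => sub_nonneg.2 (div_mem_Icc_of_mem_range hk hi).2

theorem prod_range_one_sub_div_le_one (hk : k ≤ n) :
    ∏ i ∈ range k, (1 - (i : ℝ) / n) ≤ 1 :=
  prod_le_one (fun _ hi => sub_nonneg.2 (div_mem_Icc_of_mem_range hk hi).2)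
    fun _ hi => sub_le_self _ (div_mem_Icc_of_mem_range hk hi).1

theorem one_sub_sq_div_le_prod_range_one_sub_div (hk : k ≤ n) :
    1 - (k : ℝ) ^ 2 / (2 * n) ≤ ∏ i ∈ range k, (1 - (i : ℝ) / n) := by
  have hsum : ∑ i ∈ range k, (i : ℝ) / n ≤ (k : ℝ) ^ 2 / (2 * n) := by
    rw [← sum_div, ← div_div]
    exact div_le_div_of_nonneg_right (sum_range_natCast_le k) n.cast_nonneg
  calc 1 - (k : ℝ) ^ 2 / (2 * n) ≤ 1 - ∑ i ∈ range k, (i : ℝ) / n := by linarith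
    _ ≤ ∏ i ∈ range k, (1 - (i : ℝ) / n) :=
      one_sub_sum_le_prod_one_sub _ (fun _ hi => (div_mem_Icc_of_mem_range hk hi).1)
        fun _ hi => (div_mem_Icc_of_mem_range hk hi).2

end ProdRange

theorem Real.one_sub_pow_le_exp_neg_mul {p : ℝ} (hp : p ≤ 1) (m : ℕ) :
    (1 - p) ^ m ≤ exp (-(m * p)) := by
  rw [← mul_neg, exp_nat_mul]
  exact pow_le_pow_left₀ (sub_nonneg.2 hp) (one_sub_le_exp_neg p) m

theorem Real.exp_neg_mul_mul_le_one_sub_pow {p : ℝ} (hp0 : 0 ≤ p) (hp1 : p ≤ 1) (m : ℕ) :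
    exp (-(m * p)) * (1 - m * p ^ 2) ≤ (1 - p) ^ m := by
  have hbase : exp (-p) * (1 - p ^ 2) ≤ 1 - p := by
    have h : exp (-p) * (1 + p) ≤ 1 := by
      calc exp (-p) * (1 + p) ≤ exp (-p) * exp p := by
            gcongr; linarith [add_one_le_exp p]
        _ = 1 := by rw [← exp_add, neg_add_cancel, exp_zero]
    nlinarith [mul_le_mul_of_nonneg_left h (sub_nonneg.2 hp1)]
  have hbernoulli : 1 - m * p ^ 2 ≤ (1 - p ^ 2) ^ m := by
    simpa [sub_eq_add_neg] using one_add_mul_le_pow (a := -p ^ 2) (by nlinarith) m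
  calc exp (-(m * p)) * (1 - m * p ^ 2) ≤ exp (-(m * p)) * (1 - p ^ 2) ^ m := by gcongr
    _ = (exp (-p) * (1 - p ^ 2)) ^ m := by rw [mul_pow, ← exp_nat_mul, mul_neg]
    _ ≤ (1 - p) ^ m := by
      refine pow_le_pow_left₀ (mul_nonneg (exp_pos _).le ?_) hbase m
      nlinarith

theorem Real.exp_le_one_add_two_mul {x : ℝ} (hx0 : 0 ≤ x) (hx : x ≤ 1 / 2) :
    exp x ≤ 1 + 2 * x := by
  calc exp x ≤ 1 / (1 - x) := exp_bound_div_one_sub_of_interval hx0 (by linarith)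
    _ ≤ 1 + 2 * x := by
      rw [div_le_iff₀ (by linarith)]
      nlinarith

theorem poissonPMF_nonneg {s : ℝ} (hs : 0 ≤ s) (k : ℕ) : 0 ≤ poissonPMF s k := by
  unfold poissonPMF; positivity

theorem poissonPMF_le_one {s : ℝ} (hs : 0 ≤ s) (k : ℕ) : poissonPMF s k ≤ 1 := by
  rw [poissonPMF, mul_div_assoc, exp_neg, inv_mul_le_iff₀ (exp_pos s), mul_one]
  exact pow_div_factorial_le_exp s hs k

theorem binomPMF_div_eq {n : ℕ} (hn : n ≠ 0) (s : ℝ) (k : ℕ) :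
    binomPMF n (s / n) k =
      s ^ k / k ! * (∏ i ∈ range k, (1 - (i : ℝ) / n)) * (1 - s / n) ^ (n - k) := by
  rw [binomPMF, cast_choose_mul_div_pow hn]

section Comparison

variable {s : ℝ} {k n : ℕ}

theorem binomPMF_le_poissonPMF_mul_exp (hs : 0 < s) (hsn : s ≤ n) (hk : k ≤ n) :
    binomPMF n (s / n) k ≤ poissonPMF s k * exp (s * k / n) := by
  have hn : (0 : ℝ) < n := hs.trans_le hsn
  have hp : s / n ≤ 1 := (div_le_one hn).2 hsn
  have hexponent : -(((n - k : ℕ) : ℝ) * (s / n)) = -s + s * k / n := by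
    rw [Nat.cast_sub hk]; field_simp; ring
  rw [binomPMF_div_eq (Nat.cast_pos.1 hn).ne']
  calc s ^ k / k ! * (∏ i ∈ range k, (1 - (i : ℝ) / n)) * (1 - s / n) ^ (n - k)
      ≤ s ^ k / k ! * 1 * exp (-(((n - k : ℕ) : ℝ) * (s / n))) :=
        mul_le_mul (mul_le_mul_of_nonneg_left (prod_range_one_sub_div_le_one hk) (by positivity))
          (one_sub_pow_le_exp_neg_mul hp _) (pow_nonneg (sub_nonneg.2 hp) _) (by positivity)
    _ = poissonPMF s k * exp (s * k / n) := by
        rw [hexponent, exp_add, poissonPMF]; ring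

theorem binomPMF_sub_poissonPMF_le (hs : 0 < s) (hsn : s ≤ n) (hk : k ≤ n)
    (hskn : s * k / n ≤ 1 / 2) : binomPMF n (s / n) k - poissonPMF s k ≤ 2 * (s * k / n) := by
  have hx : 0 ≤ s * k / n := by positivity
  have hP := poissonPMF_le_one hs.le k
  calc binomPMF n (s / n) k - poissonPMF s k
      ≤ poissonPMF s k * (1 + 2 * (s * k / n)) - poissonPMF s k := by
        gcongr
        exact (binomPMF_le_poissonPMF_mul_exp hs hsn hk).trans
          (by gcongr; exacts [poissonPMF_nonneg hs.le k, exp_le_one_add_two_mul hx hskn])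
    _ = poissonPMF s k * (2 * (s * k / n)) := by ring
    _ ≤ 2 * (s * k / n) := mul_le_of_le_one_left (by positivity) hP

theorem poissonPMF_mul_le_binomPMF (hs : 0 < s) (hsn : s ≤ n) (hk : k ≤ n) (hs2 : s ^ 2 ≤ n) :
    poissonPMF s k * ((1 - (k : ℝ) ^ 2 / (2 * n)) * (1 - s ^ 2 / n)) ≤ binomPMF n (s / n) k := by
  have hn : (0 : ℝ) < n := hs.trans_le hsn
  have hp0 : 0 ≤ s / n := by positivity
  have hp1 : s / n ≤ 1 := (div_le_one hn).2 hsn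
  have hb : 0 ≤ 1 - s ^ 2 / n := sub_nonneg.2 ((div_le_one hn).2 hs2)
  have hpow : exp (-s) * (1 - s ^ 2 / n) ≤ (1 - s / n) ^ (n - k) := by
    calc exp (-s) * (1 - s ^ 2 / n) = exp (-(n * (s / n))) * (1 - n * (s / n) ^ 2) := by
          field_simp
      _ ≤ (1 - s / n) ^ n := exp_neg_mul_mul_le_one_sub_pow hp0 hp1 n
      _ ≤ (1 - s / n) ^ (n - k) := pow_le_pow_of_le_one (by linarith) (by linarith) (n.sub_le k)
  rw [binomPMF_div_eq (Nat.cast_pos.1 hn).ne']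
  calc poissonPMF s k * ((1 - (k : ℝ) ^ 2 / (2 * n)) * (1 - s ^ 2 / n))
      = s ^ k / k ! * (1 - (k : ℝ) ^ 2 / (2 * n)) * (exp (-s) * (1 - s ^ 2 / n)) := by
        rw [poissonPMF]; ring
    _ ≤ s ^ k / k ! * (∏ i ∈ range k, (1 - (i : ℝ) / n)) * (1 - s / n) ^ (n - k) :=
        mul_le_mul
          (mul_le_mul_of_nonneg_left (one_sub_sq_div_le_prod_range_one_sub_div hk) (by positivity))
          hpow (mul_nonneg (exp_pos _).le hb)
          (mul_nonneg (by positivity) (prod_range_one_sub_div_nonneg hk))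

theorem poissonPMF_sub_binomPMF_le (hs : 0 < s) (hsn : s ≤ n) (hk : k ≤ n) (hs2 : s ^ 2 ≤ n) :
    poissonPMF s k - binomPMF n (s / n) k ≤ (k : ℝ) ^ 2 / (2 * n) + s ^ 2 / n := by
  have hlow := poissonPMF_mul_le_binomPMF hs hsn hk hs2
  set a := (k : ℝ) ^ 2 / (2 * n)
  set b := s ^ 2 / n
  have ha : 0 ≤ a := by positivity
  have hb : 0 ≤ b := by positivity
  calc poissonPMF s k - binomPMF n (s / n) k ≤ poissonPMF s k * (a + b - a * b) := by linarith
    _ ≤ poissonPMF s k * (a + b) := by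
        gcongr
        · exact poissonPMF_nonneg hs.le k
        · exact sub_le_self _ (mul_nonneg ha hb)
    _ ≤ a + b := mul_le_of_le_one_left (add_nonneg ha hb) (poissonPMF_le_one hs.le k)

theorem abs_poissonPMF_sub_binomPMF_le (hs : 0 < s) (hn : 2 * ((k : ℝ) ^ 2 + s ^ 2) ≤ n) :
    |poissonPMF s k - binomPMF n (s / n) k| ≤ ((k : ℝ) ^ 2 + s ^ 2) / n := by
  have hn0 : (0 : ℝ) < n := lt_of_lt_of_le (by positivity) hn
  have hn1 : (1 : ℝ) ≤ n := by exact_mod_cast Nat.cast_pos.1 hn0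
  have hkk : (k : ℝ) ≤ (k : ℝ) ^ 2 := by exact_mod_cast Nat.le_self_pow two_ne_zero k
  have hk : k ≤ n := by exact_mod_cast (by linarith [sq_nonneg s] : (k : ℝ) ≤ n)
  have hs2 : s ^ 2 ≤ n := by linarith [sq_nonneg (k : ℝ)]
  have hsn : s ≤ n := by nlinarith [sq_nonneg (s - 1)]
  have hcross : 2 * (s * k) ≤ (k : ℝ) ^ 2 + s ^ 2 := by nlinarith [sq_nonneg (s - k)]
  have hskn : s * k / n ≤ 1 / 2 := by rw [div_le_iff₀ hn0]; linarith
  have hupper : 2 * (s * k / n) ≤ ((k : ℝ) ^ 2 + s ^ 2) / n := by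
    rw [← mul_div_assoc]; exact div_le_div_of_nonneg_right hcross hn0.le
  have hlower : (k : ℝ) ^ 2 / (2 * n) + s ^ 2 / n ≤ ((k : ℝ) ^ 2 + s ^ 2) / n := by
    rw [add_div]; gcongr; linarith
  rw [abs_sub_le_iff]
  exact ⟨(poissonPMF_sub_binomPMF_le hs hsn hk hs2).trans hlower,
    (binomPMF_sub_poissonPMF_le hs hsn hk hskn).trans hupper⟩

end Comparison

theorem binomial_poisson_additive_error_general (s delta : ℝ) (k n : ℕ)
    (hs : 0 < s) (hdelta : 0 < delta) (hdelta1 : delta < 1)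
    (hn : 2 * ((k : ℝ) ^ 2 + s ^ 2) / delta ≤ n) :
    |poissonPMF s k - binomPMF n (s / n) k| ≤ delta / 2 := by
  have hq : 0 < 2 * ((k : ℝ) ^ 2 + s ^ 2) := by positivity
  have hlarge : 2 * ((k : ℝ) ^ 2 + s ^ 2) ≤ n := (le_div_self hq.le hdelta hdelta1.le).trans hn
  have hn0 : (0 : ℝ) < n := hq.trans_le hlarge
  calc |poissonPMF s k - binomPMF n (s / n) k| ≤ ((k : ℝ) ^ 2 + s ^ 2) / n :=
        abs_poissonPMF_sub_binomPMF_le hs hlarge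
    _ ≤ delta / 2 := by
        rw [div_le_iff₀ hn0]
        linarith [(div_le_iff₀ hdelta).1 hn]

theorem binomial_poisson_additive_error (s delta : ℝ) (k n : ℕ)
    (hs : 0 < s) (hdelta : 0 < delta) (hdelta1 : delta < 1)
    (hn : 2 * ((k : ℝ) ^ 2 + s ^ 2) / delta ≤ n)
    (hsn : s / n < 1) (hskn : s * k / n ≤ 1 / 2) :
    |poissonPMF s k - binomPMF n (s / n) k| ≤ delta / 2 :=
  binomial_poisson_additive_error_general s delta k n hs hdelta hdelta1 hn
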